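/- arXiv:1012.1066 — 2 statements merged into one kernel-verified Lean document; each statement's English description precedes it below -/
import Mathlib

section
/- Let λ be a partition of n. If t is a standard λ-tableau with t ≠ tab^λ, then there exists j ∈ [2,n] with row_t(j−1) > row_t(j) and col_t(j−1) < col_t(j), such that s_{j−1}·t is again a standard λ-tableau and l(s_{j−1}t) > l(t). Consequently tab^λ is the unique maximal standard λ-tableau in the left weak order. -/
/-!
If `t ≠ tab^λ`, the row of an entry is not weakly increasing in the entry, so some `i + 1`
sits in a higher row than `i`; standardness then puts it in a later column. Swapping `i` and
`i + 1` therefore keeps `t` standard, and since `t_λ` is read by columns it adds exactly one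
inversion to `w_t`. Conversely, an inversion of `w_t` for standard `t` pairs two cells, one
strictly above and to the right of the other, and is therefore an inversion of `w_{tab^λ}`.
Hence `tab^λ` has maximal length and nothing lies strictly above it, while any other standard
tableau lies strictly below its swap.
-/
noncomputable section

namespace WGTab

/-- The Coxeter length of a permutation of `Fin n`: the number of inversions. -/
def invLength {n : ℕ} (w : Equiv.Perm (Fin n)) : ℕ :=
  (Finset.univ.filter fun p : Fin n × Fin n => p.1 < p.2 ∧ w p.2 < w p.1).card

/-- The cells of a Young diagram, as a type; a cell is a pair (row index, column index). -/
abbrev Cell (μ : YoungDiagram) : Type := {c : ℕ × ℕ // c ∈ μ}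

/-- `tc` is the column-reading tableau `t_λ`: its entries are ordered by column, then by
row; equivalently its columns consist of consecutive integers, filled column by column. -/
def IsColReading {n : ℕ} {μ : YoungDiagram} (tc : Cell μ ≃ Fin n) : Prop :=
  ∀ c c' : Cell μ,
    tc c < tc c' ↔ (c.1.2 < c'.1.2 ∨ (c.1.2 = c'.1.2 ∧ c.1.1 < c'.1.1))

/-- `tr` is the row-reading tableau `tab^λ`: its entries are ordered by row, then by
column; equivalently its rows consist of consecutive integers, filled row by row. -/
def IsRowReading {n : ℕ} {μ : YoungDiagram} (tr : Cell μ ≃ Fin n) : Prop :=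
  ∀ c c' : Cell μ,
    tr c < tr c' ↔ (c.1.1 < c'.1.1 ∨ (c.1.1 = c'.1.1 ∧ c.1.2 < c'.1.2))

/-- A standard tableau: entries increase along rows and down columns. -/
def IsStdTab {n : ℕ} {μ : YoungDiagram} (t : Cell μ ≃ Fin n) : Prop :=
  ∀ c c' : Cell μ,
    ((c.1.1 = c'.1.1 ∧ c.1.2 < c'.1.2) → t c < t c') ∧
    ((c.1.2 = c'.1.2 ∧ c.1.1 < c'.1.1) → t c < t c')

/-- The row index of the entry `i` in the tableau `t`. -/
def rowOf {n : ℕ} {μ : YoungDiagram} (t : Cell μ ≃ Fin n) (i : Fin n) : ℕ := (t.symm i).1.1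

/-- The column index of the entry `i` in the tableau `t`. -/
def colOf {n : ℕ} {μ : YoungDiagram} (t : Cell μ ≃ Fin n) (i : Fin n) : ℕ := (t.symm i).1.2

/-- The permutation `w` with `t = w · t_λ` (where `tc` plays the role of `t_λ`). -/
def wOf {n : ℕ} {μ : YoungDiagram} (tc t : Cell μ ≃ Fin n) : Equiv.Perm (Fin n) :=
  tc.symm.trans t

/-- The left weak order on the symmetric group: `u ≤_L w` iff `l(wu⁻¹) = l(w) - l(u)`. -/
def WkLeP {n : ℕ} (u w : Equiv.Perm (Fin n)) : Prop :=
  invLength (w * u⁻¹) + invLength u = invLength w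

/-- Strict left weak order. -/
def WkLtP {n : ℕ} (u w : Equiv.Perm (Fin n)) : Prop := WkLeP u w ∧ u ≠ w

lemma Equiv.Perm.eq_one_of_strictMono {α : Type*} [LinearOrder α] [WellFoundedLT α]
    {w : Equiv.Perm α} (h : StrictMono w) : w = 1 :=
  Equiv.ext fun x =>
    congrArg (· x) (Subsingleton.elim (h.orderIsoOfSurjective w w.surjective) (OrderIso.refl α))

lemma Fin.monotone_of_le_succ {α : Type*} [Preorder α] {n : ℕ} {f : Fin n → α}
    (h : ∀ (i : ℕ) (hi : i + 1 < n), f ⟨i, Nat.lt_of_succ_lt hi⟩ ≤ f ⟨i + 1, hi⟩) :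
    Monotone f := by
  rintro ⟨x, hx⟩ ⟨y, hy⟩ (hxy : x ≤ y)
  induction y, hxy using Nat.le_induction with
  | base => exact le_rfl
  | succ k _ ih => exact (ih (by omega)).trans (h k hy)

section InvLength

variable {n : ℕ}

def inversions (w : Equiv.Perm (Fin n)) : Finset (Fin n × Fin n) :=
  Finset.univ.filter fun p => p.1 < p.2 ∧ w p.2 < w p.1

lemma invLength_eq_card_inversions (w : Equiv.Perm (Fin n)) :
    invLength w = (inversions w).card := rfl

lemma mem_inversions {w : Equiv.Perm (Fin n)} {p : Fin n × Fin n} :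
    p ∈ inversions w ↔ p.1 < p.2 ∧ w p.2 < w p.1 := by
  simp [inversions]

lemma invLength_eq_zero_iff {w : Equiv.Perm (Fin n)} : invLength w = 0 ↔ w = 1 := by
  refine ⟨fun h => Equiv.Perm.eq_one_of_strictMono fun x y hxy => ?_, ?_⟩
  · rw [invLength_eq_card_inversions, Finset.card_eq_zero] at h
    have hxy' : (x, y) ∉ inversions w := h ▸ Finset.notMem_empty _
    rw [mem_inversions, not_and, not_lt] at hxy'
    exact (hxy' hxy).lt_of_ne (w.injective.ne hxy.ne)
  · rintro rfl
    rw [invLength_eq_card_inversions, Finset.card_eq_zero, Finset.eq_empty_iff_forall_notMem]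
    rintro p hp
    rw [mem_inversions] at hp
    exact lt_asymm hp.1 hp.2

lemma swap_lt_swap_of_adjacent {a b x y : Fin n} (hab : (b : ℕ) = a + 1) (hxy : x < y)
    (hne : ¬(x = a ∧ y = b)) : Equiv.swap a b x < Equiv.swap a b y := by
  rw [Equiv.swap_apply_def, Equiv.swap_apply_def]
  split_ifs <;> simp only [Fin.lt_def, Fin.ext_iff, not_and] at * <;> omega

lemma inversions_swap_mul {a b : Fin n} (hab : (b : ℕ) = a + 1) {w : Equiv.Perm (Fin n)}
    (h : w⁻¹ a < w⁻¹ b) :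
    inversions (Equiv.swap a b * w) = insert (w⁻¹ a, w⁻¹ b) (inversions w) := by
  have hab' : a < b := Fin.lt_def.2 (by omega)
  ext ⟨x, y⟩
  rw [Finset.mem_insert, mem_inversions, mem_inversions, Prod.ext_iff]
  simp only [Equiv.Perm.mul_apply, Equiv.Perm.eq_inv_iff_eq]
  by_cases hxy : w x = a ∧ w y = b
  · obtain ⟨hx, hy⟩ := hxy
    have hlt : x < y := by simpa [← hx, ← hy] using h
    simp [hx, hy, hlt, hab']
  · simp only [hxy, false_or]
    refine and_congr_right fun hlt => ⟨fun hs => ?_, fun hw => ?_⟩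
    · refine (lt_or_gt_of_ne (w.injective.ne hlt.ne')).resolve_right fun hw => ?_
      exact lt_asymm hs (swap_lt_swap_of_adjacent hab hw hxy)
    refine swap_lt_swap_of_adjacent hab hw fun ⟨hy, hx⟩ => ?_
    exact lt_asymm hlt (by simpa [← hx, ← hy] using h)

lemma invLength_swap_mul {a b : Fin n} (hab : (b : ℕ) = a + 1) {w : Equiv.Perm (Fin n)}
    (h : w⁻¹ a < w⁻¹ b) : invLength (Equiv.swap a b * w) = invLength w + 1 := by
  rw [invLength_eq_card_inversions, inversions_swap_mul hab h, Finset.card_insert_of_notMem]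
  · rfl
  rw [mem_inversions, Equiv.Perm.coe_inv, Equiv.apply_symm_apply, Equiv.apply_symm_apply]
  exact fun hinv => lt_asymm hinv.2 (Fin.lt_def.2 (by omega))

lemma invLength_swap {a b : Fin n} (hab : (b : ℕ) = a + 1) :
    invLength (Equiv.swap a b) = 1 := by
  have h := invLength_swap_mul hab (w := 1) (by simp [Fin.lt_def, hab])
  rwa [mul_one, invLength_eq_zero_iff.2 rfl] at h

lemma not_wkLtP_of_invLength_le {u w : Equiv.Perm (Fin n)} (h : invLength w ≤ invLength u) :
    ¬ WkLtP u w := by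
  rintro ⟨hle, hne⟩
  have h0 : invLength (w * u⁻¹) = 0 := by unfold WkLeP at hle; omega
  exact hne (mul_inv_eq_one.1 (invLength_eq_zero_iff.1 h0)).symm

lemma wkLtP_swap_mul {a b : Fin n} (hab : (b : ℕ) = a + 1) {w : Equiv.Perm (Fin n)}
    (h : invLength (Equiv.swap a b * w) = invLength w + 1) :
    WkLtP w (Equiv.swap a b * w) := by
  refine ⟨?_, fun hw => by rw [← hw] at h; omega⟩
  rw [WkLeP, mul_inv_cancel_right, invLength_swap hab, h, add_comm]

end InvLength

section Tableau

variable {n : ℕ} {μ : YoungDiagram}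

lemma IsRowReading.isStdTab {tr : Cell μ ≃ Fin n} (htr : IsRowReading tr) : IsStdTab tr :=
  fun c c' => ⟨fun h => (htr c c').2 (Or.inr h), fun h => (htr c c').2 (Or.inl h.2)⟩

lemma IsRowReading.eq_of_lt {tr t : Cell μ ≃ Fin n} (htr : IsRowReading tr)
    (ht : ∀ c c' : Cell μ,
      (c.1.1 < c'.1.1 ∨ (c.1.1 = c'.1.1 ∧ c.1.2 < c'.1.2)) → t c < t c') :
    t = tr := by
  have hmono : StrictMono (tr.symm.trans t) := fun x y hxy =>
    ht _ _ ((htr _ _).1 (by simpa using hxy))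
  have h1 := Equiv.Perm.eq_one_of_strictMono hmono
  exact Equiv.ext fun c => by simpa using DFunLike.congr_fun h1 (tr c)

lemma IsStdTab.lt_of_le_of_le {t : Cell μ ≃ Fin n} (ht : IsStdTab t) {c c' : Cell μ}
    (hr : c.1.1 ≤ c'.1.1) (hc : c.1.2 ≤ c'.1.2) (hne : c ≠ c') : t c < t c' := by
  rcases hr.lt_or_eq with hr | hr <;> rcases hc.lt_or_eq with hc | hc
  · have hd : (c.1.1, c'.1.2) ∈ μ := μ.up_left_mem hr.le le_rfl c'.2
    exact ((ht c ⟨_, hd⟩).1 ⟨rfl, hc⟩).trans ((ht ⟨_, hd⟩ c').2 ⟨rfl, hr⟩)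
  · exact (ht c c').2 ⟨hc, hr⟩
  · exact (ht c c').1 ⟨hr, hc⟩
  · exact absurd (Subtype.ext (Prod.ext hr hc)) hne

lemma IsStdTab.colOf_lt_of_lt_of_rowOf_lt {t : Cell μ ≃ Fin n} (ht : IsStdTab t) {a b : Fin n}
    (hab : a < b) (hrow : rowOf t b < rowOf t a) : colOf t a < colOf t b := by
  by_contra! hcol
  have hne : t.symm b ≠ t.symm a := t.symm.injective.ne hab.ne'
  have hba := ht.lt_of_le_of_le hrow.le hcol hne
  rw [Equiv.apply_symm_apply, Equiv.apply_symm_apply] at hba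
  exact lt_asymm hab hba

lemma IsStdTab.eq_of_monotone_rowOf {tr t : Cell μ ≃ Fin n} (htr : IsRowReading tr)
    (ht : IsStdTab t) (hmono : Monotone (rowOf t)) : t = tr := by
  refine htr.eq_of_lt fun c c' hlex => ?_
  rcases hlex with hr | hsame
  · refine (lt_or_gt_of_ne (t.injective.ne fun h => hr.ne (congrArg (·.1.1) h))).resolve_right
      fun hlt => hr.not_ge ?_
    simpa [rowOf] using hmono hlt.le
  · exact (ht c c').1 hsame

lemma exists_rowOf_succ_lt {tr t : Cell μ ≃ Fin n} (htr : IsRowReading tr) (ht : IsStdTab t)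
    (hne : t ≠ tr) :
    ∃ (i : ℕ) (hi : i + 1 < n),
      rowOf t ⟨i + 1, hi⟩ < rowOf t ⟨i, Nat.lt_of_succ_lt hi⟩ := by
  by_contra! h
  exact hne (ht.eq_of_monotone_rowOf htr (Fin.monotone_of_le_succ h))

lemma IsStdTab.trans_swap {t : Cell μ ≃ Fin n} (ht : IsStdTab t) {a b : Fin n}
    (hab : (b : ℕ) = a + 1) (hrow : rowOf t a ≠ rowOf t b) (hcol : colOf t a ≠ colOf t b) :
    IsStdTab (t.trans (Equiv.swap a b)) := by
  have key : ∀ d d' : Cell μ, t d < t d' → d.1.1 = d'.1.1 ∨ d.1.2 = d'.1.2 →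
      t.trans (Equiv.swap a b) d < t.trans (Equiv.swap a b) d' := by
    intro d d' hlt hline
    refine swap_lt_swap_of_adjacent hab hlt fun ⟨hd, hd'⟩ => ?_
    subst hd hd'
    simp only [rowOf, colOf, Equiv.symm_apply_apply] at hrow hcol
    tauto
  intro d d'
  exact ⟨fun h => key d d' ((ht d d').1 h) (Or.inl h.1),
    fun h => key d d' ((ht d d').2 h) (Or.inr h.1)⟩

lemma IsStdTab.rowOf_lt_of_inversion {tc t : Cell μ ≃ Fin n} (htc : IsColReading tc)
    (ht : IsStdTab t) {c c' : Cell μ} (hc : tc c < tc c') (ht' : t c' < t c) :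
    c'.1.1 < c.1.1 := by
  by_contra! hrow
  have hcol : c.1.2 ≤ c'.1.2 := by
    rcases (htc c c').1 hc with h | h
    exacts [h.le, h.1.le]
  exact lt_asymm ht' (ht.lt_of_le_of_le hrow hcol fun h => hc.ne (congrArg tc h))

lemma inversions_wOf_subset {tc tr t : Cell μ ≃ Fin n} (htc : IsColReading tc)
    (htr : IsRowReading tr) (ht : IsStdTab t) :
    inversions (wOf tc t) ⊆ inversions (wOf tc tr) := by
  rintro ⟨p, q⟩ hpq
  rw [mem_inversions] at hpq ⊢
  refine ⟨hpq.1, (htr _ _).2 (Or.inl (ht.rowOf_lt_of_inversion htc ?_ hpq.2))⟩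
  simpa using hpq.1

lemma invLength_wOf_le {tc tr t : Cell μ ≃ Fin n} (htc : IsColReading tc)
    (htr : IsRowReading tr) (ht : IsStdTab t) : invLength (wOf tc t) ≤ invLength (wOf tc tr) :=
  Finset.card_le_card (inversions_wOf_subset htc htr ht)

lemma invLength_swap_mul_wOf {tc t : Cell μ ≃ Fin n} (htc : IsColReading tc) {a b : Fin n}
    (hab : (b : ℕ) = a + 1) (hcol : colOf t a < colOf t b) :
    invLength (Equiv.swap a b * wOf tc t) = invLength (wOf tc t) + 1 :=
  invLength_swap_mul hab ((htc _ _).2 (Or.inl hcol))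

lemma exists_swap_isStdTab_invLength_succ {tc tr t : Cell μ ≃ Fin n} (htc : IsColReading tc)
    (htr : IsRowReading tr) (ht : IsStdTab t) (hne : t ≠ tr) :
    ∃ (i : ℕ) (hi : i + 1 < n),
      rowOf t ⟨i + 1, hi⟩ < rowOf t ⟨i, Nat.lt_of_succ_lt hi⟩ ∧
      colOf t ⟨i, Nat.lt_of_succ_lt hi⟩ < colOf t ⟨i + 1, hi⟩ ∧
      IsStdTab (t.trans (Equiv.swap ⟨i, Nat.lt_of_succ_lt hi⟩ ⟨i + 1, hi⟩)) ∧
      invLength (Equiv.swap ⟨i, Nat.lt_of_succ_lt hi⟩ ⟨i + 1, hi⟩ * wOf tc t) =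
        invLength (wOf tc t) + 1 := by
  obtain ⟨i, hi, hrow⟩ := exists_rowOf_succ_lt htr ht hne
  have hcol := ht.colOf_lt_of_lt_of_rowOf_lt (Fin.lt_def.2 (Nat.lt_succ_self i)) hrow
  exact ⟨i, hi, hrow, hcol, ht.trans_swap rfl hrow.ne' hcol.ne,
    invLength_swap_mul_wOf htc rfl hcol⟩

end Tableau

theorem stmt4_general (n : ℕ) (μ : YoungDiagram)
    (tc tr : Cell μ ≃ Fin n) (htc : IsColReading tc) (htr : IsRowReading tr) :
    (∀ t : Cell μ ≃ Fin n, IsStdTab t → t ≠ tr →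
      ∃ (i : ℕ) (hi : i + 1 < n),
        rowOf t ⟨i + 1, hi⟩ < rowOf t ⟨i, Nat.lt_of_succ_lt hi⟩ ∧
        colOf t ⟨i, Nat.lt_of_succ_lt hi⟩ < colOf t ⟨i + 1, hi⟩ ∧
        IsStdTab (t.trans (Equiv.swap ⟨i, Nat.lt_of_succ_lt hi⟩ ⟨i + 1, hi⟩)) ∧
        invLength (Equiv.swap ⟨i, Nat.lt_of_succ_lt hi⟩ ⟨i + 1, hi⟩ * wOf tc t) >
          invLength (wOf tc t)) ∧
    IsStdTab tr ∧
    (∀ u : Cell μ ≃ Fin n, IsStdTab u → ¬ WkLtP (wOf tc tr) (wOf tc u)) ∧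
    (∀ t : Cell μ ≃ Fin n, IsStdTab t →
      (∀ u : Cell μ ≃ Fin n, IsStdTab u → ¬ WkLtP (wOf tc t) (wOf tc u)) → t = tr) := by
  refine ⟨fun t ht hne => ?_, htr.isStdTab,
    fun u hu => not_wkLtP_of_invLength_le (invLength_wOf_le htc htr hu), fun t ht hmax => ?_⟩
  · obtain ⟨i, hi, hrow, hcol, hstd, hlen⟩ :=
      exists_swap_isStdTab_invLength_succ htc htr ht hne
    exact ⟨i, hi, hrow, hcol, hstd, by omega⟩
  · by_contra hne
    obtain ⟨i, hi, -, -, hstd, hlen⟩ := exists_swap_isStdTab_invLength_succ htc htr ht hne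
    exact hmax _ hstd (wkLtP_swap_mul rfl hlen)

/-- every standard tableau `t ≠ tab^λ` admits entries `j-1, j` (0-indexed
`i, i+1`) with `row_t(j-1) > row_t(j)`, `col_t(j-1) < col_t(j)`, such that `s_{j-1} t` is
standard and longer than `t`; consequently `tab^λ` is the unique maximal standard
tableau in the left weak order. -/
theorem stmt4 (n : ℕ) (μ : YoungDiagram) (hcard : μ.cells.card = n)
    (tc tr : Cell μ ≃ Fin n) (htc : IsColReading tc) (htr : IsRowReading tr) :
    (∀ t : Cell μ ≃ Fin n, IsStdTab t → t ≠ tr →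
      ∃ (i : ℕ) (hi : i + 1 < n),
        rowOf t ⟨i + 1, hi⟩ < rowOf t ⟨i, Nat.lt_of_succ_lt hi⟩ ∧
        colOf t ⟨i, Nat.lt_of_succ_lt hi⟩ < colOf t ⟨i + 1, hi⟩ ∧
        IsStdTab (t.trans (Equiv.swap ⟨i, Nat.lt_of_succ_lt hi⟩ ⟨i + 1, hi⟩)) ∧
        invLength (Equiv.swap ⟨i, Nat.lt_of_succ_lt hi⟩ ⟨i + 1, hi⟩ * wOf tc t) >
          invLength (wOf tc t)) ∧
    IsStdTab tr ∧
    (∀ u : Cell μ ≃ Fin n, IsStdTab u → ¬ WkLtP (wOf tc tr) (wOf tc u)) ∧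
    (∀ t : Cell μ ≃ Fin n, IsStdTab t →
      (∀ u : Cell μ ≃ Fin n, IsStdTab u → ¬ WkLtP (wOf tc t) (wOf tc u)) → t = tr) :=
  stmt4_general n μ tc tr htc htr

end WGTab
end
end

section
/- Let 𝔍 be a W-graph ideal with respect to J and q_{y,w} the associated polynomials. For all y < w in 𝔍, the degree of q_{y,w} is at most l(w) − l(y) − 1. -/
open LaurentPolynomial Polynomial

noncomputable section

namespace WGI

/-- The ring `A = ℤ[q,q⁻¹]` of Laurent polynomials. -/
abbrev A : Type := LaurentPolynomial ℤ

/-- The indeterminate `q`. -/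
def Q : A := LaurentPolynomial.T 1

/-- The element `q⁻¹`. -/
def Qi : A := LaurentPolynomial.T (-1)

variable {B W : Type} [Group W] {M : CoxeterMatrix B} (cs : CoxeterSystem M W)

/-- One step of the relation generating the Bruhat order: `w = tu` for a reflection `t`
(or `t = 1`) and `l(u) ≤ l(w)`. -/
def BStep (u w : W) : Prop :=
  cs.length u ≤ cs.length w ∧ ∃ t : W, (cs.IsReflection t ∨ t = 1) ∧ w = t * u

/-- The Bruhat order on `W`: the transitive (and reflexive) closure of `BStep`. -/
def BrLe (u w : W) : Prop := Relation.ReflTransGen (BStep cs) u w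

/-- Strict Bruhat order. -/
def BrLt (u w : W) : Prop := BrLe cs u w ∧ u ≠ w

/-- The left weak order: `u ≤_L w` iff `l(wu⁻¹) = l(w) - l(u)`, i.e. `u` is a suffix of `w`. -/
def WkLe (u w : W) : Prop := cs.length (w * u⁻¹) + cs.length u = cs.length w

/-- Strict left weak order. -/
def WkLt (u w : W) : Prop := WkLe cs u w ∧ u ≠ w

/-- An ideal of `(W, ≤_L)`: a subset closed under taking suffixes. -/
def IsIdealWk (I : Set W) : Prop := ∀ u w : W, WkLe cs u w → w ∈ I → u ∈ I

/-- The set `D_J` of minimal left coset representatives of `W_J`. -/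
def DD (J : Set B) : Set W := { w | ∀ j ∈ J, cs.length w < cs.length (w * cs.simple j) }

/-- Strong ascent: `sw > w` and `sw ∈ I`. -/
def SA (I : Set W) (s : B) (w : W) : Prop :=
  cs.length w < cs.length (cs.simple s * w) ∧ cs.simple s * w ∈ I

/-- Strong descent: `sw < w`. -/
def SD (s : B) (w : W) : Prop := cs.length (cs.simple s * w) < cs.length w

/-- Weak ascent: `sw > w` and `sw ∈ D_J \ I`. -/
def WA (I : Set W) (J : Set B) (s : B) (w : W) : Prop :=
  cs.length w < cs.length (cs.simple s * w) ∧ cs.simple s * w ∈ DD cs J \ I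

/-- Weak descent: `sw > w` and `sw ∉ D_J`. -/
def WD (J : Set B) (s : B) (w : W) : Prop :=
  cs.length w < cs.length (cs.simple s * w) ∧ cs.simple s * w ∉ DD cs J

/-- Descents: strong or weak. -/
def Desc (J : Set B) (s : B) (w : W) : Prop := SD cs s w ∨ WD cs J s w

/-- Ascents: strong or weak. -/
def Asc (I : Set W) (J : Set B) (s : B) (w : W) : Prop := SA cs I s w ∨ WA cs I J s w

/-- The data making the ideal `I` (of the left weak order, contained in `D_J`) a
`W`-graph ideal with respect to `J`: an `H(W)`-module (a module together with operators
`T s` satisfying the quadratic and braid relations of the Hecke algebra) which is free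
over `A` with basis indexed by `I`, on which the generators act by the four-case formula
of Definition 5.2, together with a compatible semilinear bar involution fixing `b₁`. -/
structure WGModule (I : Set W) (J : Set B) where
  V : Type
  [acg : AddCommGroup V]
  [mod : Module A V]
  ideal : IsIdealWk cs I
  subset : I ⊆ DD cs J
  one_mem : (1 : W) ∈ I
  bas : Module.Basis I A V
  T : B → V →ₗ[A] V
  quad : ∀ s : B, (T s) ∘ₗ (T s) = LinearMap.id + (Q - Qi) • T s
  braid : ∀ s t : B,
    ((CoxeterSystem.alternatingWord s t (M s t)).map fun i => (T i : Module.End A V)).prod =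
    ((CoxeterSystem.alternatingWord t s (M s t)).map fun i => (T i : Module.End A V)).prod
  /-- the polynomials `r^s_{y,w}` (divided by `q`, as elements of `ℤ[q]` with zero constant
  term they are recorded in `qℤ[q]` via `r_const`); `r s w y` is `r^s_{y,w}`. -/
  r : B → I → (I →₀ Polynomial ℤ)
  r_const : ∀ (s : B) (w y : I), ((r s w) y).coeff 0 = 0
  r_supp : ∀ (s : B) (w y : I), (r s w) y ≠ 0 → BrLt cs (y : W) (cs.simple s * (w : W))
  act_SA : ∀ (s : B) (w : I) (h : SA cs I s (w : W)),
    T s (bas w) = bas ⟨cs.simple s * (w : W), h.2⟩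
  act_SD : ∀ (s : B) (w : I), SD cs s (w : W) → ∀ h' : cs.simple s * (w : W) ∈ I,
    T s (bas w) = bas ⟨cs.simple s * (w : W), h'⟩ + (Q - Qi) • bas w
  act_WD : ∀ (s : B) (w : I), WD cs J s (w : W) → T s (bas w) = -Qi • bas w
  act_WA : ∀ (s : B) (w : I), WA cs I J s (w : W) →
    T s (bas w) = Q • bas w - (r s w).sum fun y p => (Polynomial.toLaurent p) • bas y
  bar : V → V
  bar_add : ∀ x y : V, bar (x + y) = bar x + bar y
  bar_smul : ∀ (a : A) (x : V), bar (a • x) = (LaurentPolynomial.invert a) • bar x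
  bar_one : bar (bas ⟨(1 : W), one_mem⟩) = bas ⟨(1 : W), one_mem⟩
  bar_T : ∀ (s : B) (x : V), bar (T s x) = T s (bar x) - (Q - Qi) • bar x

attribute [instance] WGModule.acg WGModule.mod

/-- `I` is a `W`-graph ideal with respect to `J`. -/
def IsWGraphIdeal (I : Set W) (J : Set B) : Prop := Nonempty (WGModule cs I J)


open scoped Classical

/-!
Write `ℓ` for the Coxeter length and `b_w` for `bas w`. By induction on `ℓ w`, using
`b_w = T_s b_{sw}` for a left descent `s` and the compatibility of `bar` with `T_s`,
`bar b_w - b_w` is a combination of the `b_z` with `ℓ z < ℓ w` whose coefficient at `b_z` has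
degree at most `ℓ w - ℓ z`. Along the way, the same compatibility at a weak ascent shows that
`T_s` raises this weighted degree by at most one, which bounds the polynomials `r^s`.

Since `c` is bar-invariant, `b_w - c_w = bar (b_w - c_w) - (bar b_w - b_w)`. The coefficients of
`b_w - c_w = Σ_y q q_{y,w} c_y` lie in `qℤ[q]`, so those of the first term have negative degree;
rewriting the second term in the basis `c` by induction on `ℓ w` shows that its coefficient at
`c_y` has degree at most `ℓ w - ℓ y`. Hence `deg (q q_{y,w}) ≤ ℓ w - ℓ y`.
-/

section LaurentDegree

variable {R : Type*}

section LaurentSemiring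

variable [Semiring R]

theorem _root_.LaurentPolynomial.degree_le_iff_coeff_zero (f : R[T;T⁻¹]) (n : ℤ) :
    f.degree ≤ n ↔ ∀ m : ℤ, n < m → f.coeff m = 0 := by
  refine ⟨fun h m hm => ?_, fun h => Finset.max_le fun m hm => ?_⟩
  · exact AddMonoidAlgebra.coeff_eq_zero_of_not_le_supDegree fun hle =>
      (h.trans_lt (WithBot.coe_lt_coe.mpr hm)).not_ge hle
  · by_contra hlt
    exact Finsupp.mem_support_iff.mp hm (h m (WithBot.coe_lt_coe.mp (not_le.mp hlt)))

theorem _root_.LaurentPolynomial.degree_add_le (f g : R[T;T⁻¹]) :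
    (f + g).degree ≤ max f.degree g.degree :=
  AddMonoidAlgebra.supDegree_add_le

theorem _root_.LaurentPolynomial.degree_mul_le (f g : R[T;T⁻¹]) :
    (f * g).degree ≤ f.degree + g.degree :=
  AddMonoidAlgebra.supDegree_mul_le fun _ _ => WithBot.coe_add _ _

theorem _root_.LaurentPolynomial.degree_mul_le_of_le {f g : R[T;T⁻¹]} {m n : ℤ}
    (hf : f.degree ≤ m) (hg : g.degree ≤ n) : (f * g).degree ≤ ↑(m + n) :=
  (LaurentPolynomial.degree_mul_le f g).trans (by rw [WithBot.coe_add]; exact add_le_add hf hg)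

theorem _root_.LaurentPolynomial.degree_toLaurent_le_iff (p : R[X]) (n : ℕ) :
    (toLaurent p).degree ≤ (n : ℤ) ↔ p.degree ≤ n := by
  simp only [LaurentPolynomial.degree, Polynomial.degree, support_coeff_toLaurent]
  simp [Finset.max_le_iff, Nat.cast_withBot]

theorem _root_.Polynomial.degree_le_of_degree_X_mul_le {p : R[X]} {n : ℕ}
    (h : (X * p).degree ≤ ↑(n + 1)) : p.degree ≤ n := by
  rw [Polynomial.degree_le_iff_coeff_zero] at h ⊢
  intro m hm
  rw [← coeff_X_mul]
  exact h (m + 1) (by exact_mod_cast Nat.succ_lt_succ (WithBot.coe_lt_coe.mp hm))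

end LaurentSemiring

theorem _root_.LaurentPolynomial.degree_invert_toLaurent_le [CommSemiring R] {p : R[X]}
    (hp : p.coeff 0 = 0) : (invert (toLaurent p)).degree ≤ (-1 : ℤ) := by
  rw [LaurentPolynomial.degree_le_iff_coeff_zero]
  intro m hm
  rw [invert_apply]
  by_contra h
  obtain ⟨k, hk, hkm⟩ := Finset.mem_map.mp
    ((support_coeff_toLaurent p).symm ▸ Finsupp.mem_support_iff.mpr h)
  obtain rfl : k = 0 := by simp only [Nat.castEmbedding_apply] at hkm; omega
  exact Polynomial.mem_support_iff.mp hk hp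

theorem _root_.LaurentPolynomial.degree_sub_le [Ring R] (f g : R[T;T⁻¹]) :
    (f - g).degree ≤ max f.degree g.degree :=
  AddMonoidAlgebra.supDegree_sub_le

end LaurentDegree

theorem invert_Q : invert Q = Qi :=
  invert_T 1

theorem Q_mul_toLaurent (p : ℤ[X]) : Q * toLaurent p = toLaurent (X * p) := by
  rw [map_mul, toLaurent_X]
  rfl

theorem degree_Q_le : (Q : A).degree ≤ (1 : ℤ) :=
  degree_T_le 1

theorem degree_Qi_le : (Qi : A).degree ≤ (-1 : ℤ) :=
  degree_T_le (-1)

theorem degree_Q_sub_Qi_le : (Q - Qi : A).degree ≤ (1 : ℤ) :=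
  (LaurentPolynomial.degree_sub_le _ _).trans
    (max_le degree_Q_le (degree_Qi_le.trans (WithBot.coe_le_coe.mpr (by norm_num))))

section WeightedDegree

open Module.Basis

variable {R ι κ V V' : Type*} [Ring R] [AddCommGroup V] [Module R[T;T⁻¹] V]
  [AddCommGroup V'] [Module R[T;T⁻¹] V'] (b : Module.Basis ι R[T;T⁻¹] V) (ℓ : ι → ℕ)

def _root_.Module.Basis.weightedDegreeLE (n : ℤ) : AddSubgroup V where
  carrier := {x | ∀ i, (b.repr x i).degree ≤ ↑(n - ℓ i)}
  add_mem' {x y} hx hy i := by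
    rw [map_add, Finsupp.add_apply]
    exact (LaurentPolynomial.degree_add_le _ _).trans (max_le (hx i) (hy i))
  zero_mem' i := by simp
  neg_mem' {x} hx i := by
    rw [map_neg, Finsupp.neg_apply]
    exact (AddMonoidAlgebra.supDegree_neg (f := b.repr x i)).trans_le (hx i)

def _root_.Module.Basis.spanLengthLT (n : ℤ) : Submodule R[T;T⁻¹] V :=
  Submodule.span R[T;T⁻¹] (b '' {i | (ℓ i : ℤ) < n})

variable {b ℓ}

theorem _root_.Module.Basis.mem_weightedDegreeLE {n : ℤ} {x : V} :
    x ∈ b.weightedDegreeLE ℓ n ↔ ∀ i, (b.repr x i).degree ≤ ↑(n - ℓ i) :=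
  Iff.rfl

theorem _root_.Module.Basis.weightedDegreeLE_mono {m n : ℤ} (h : m ≤ n) :
    b.weightedDegreeLE ℓ m ≤ b.weightedDegreeLE ℓ n :=
  fun _ hx i => (hx i).trans (WithBot.coe_le_coe.mpr (by omega))

theorem _root_.Module.Basis.spanLengthLT_mono {m n : ℤ} (h : m ≤ n) :
    b.spanLengthLT ℓ m ≤ b.spanLengthLT ℓ n :=
  Submodule.span_mono (Set.image_mono fun _ hi => lt_of_lt_of_le hi h)

theorem _root_.Module.Basis.self_mem_weightedDegreeLE (i : ι) :
    b i ∈ b.weightedDegreeLE ℓ (ℓ i) := by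
  intro j
  rw [repr_self, Finsupp.single_apply]
  split_ifs with h
  · subst h; simpa using degree_C_le (1 : R)
  · simp

theorem _root_.Module.Basis.self_mem_spanLengthLT {i : ι} {n : ℤ} (h : (ℓ i : ℤ) < n) :
    b i ∈ b.spanLengthLT ℓ n :=
  Submodule.subset_span ⟨i, h, rfl⟩

theorem _root_.Module.Basis.smul_mem_weightedDegreeLE {a : R[T;T⁻¹]} {m n : ℤ} {x : V}
    (ha : a.degree ≤ m) (hx : x ∈ b.weightedDegreeLE ℓ n) :
    a • x ∈ b.weightedDegreeLE ℓ (m + n) := by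
  intro i
  rw [map_smul, Finsupp.smul_apply, smul_eq_mul]
  exact (LaurentPolynomial.degree_mul_le_of_le ha (hx i)).trans
    (WithBot.coe_le_coe.mpr (by omega))

theorem _root_.Module.Basis.linearCombination_mem_weightedDegreeLE_iff {n : ℤ}
    {f : ι →₀ R[T;T⁻¹]} :
    Finsupp.linearCombination _ b f ∈ b.weightedDegreeLE ℓ n ↔
      ∀ i, (f i).degree ≤ ↑(n - ℓ i) := by
  rw [mem_weightedDegreeLE, repr_linearCombination]

theorem _root_.Module.Basis.map_mem_weightedDegreeLE {b' : Module.Basis κ R[T;T⁻¹] V'}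
    {ℓ' : κ → ℕ} (f : V →ₗ[R[T;T⁻¹]] V') {k n : ℤ} {x : V}
    (hf : ∀ i, (ℓ i : ℤ) < n → f (b i) ∈ b'.weightedDegreeLE ℓ' (ℓ i + k))
    (hxL : x ∈ b.spanLengthLT ℓ n) (hxF : x ∈ b.weightedDegreeLE ℓ n) :
    f x ∈ b'.weightedDegreeLE ℓ' (n + k) := by
  rw [← b.linearCombination_repr x, Finsupp.linearCombination_apply, map_finsuppSum, Finsupp.sum]
  refine sum_mem fun i hi => ?_
  have hi' : (ℓ i : ℤ) < n := (b.mem_span_image.mp hxL) hi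
  rw [map_smul, show n + k = n - ℓ i + (ℓ i + k) by ring]
  exact smul_mem_weightedDegreeLE (hxF i) (hf i hi')

end WeightedDegree

section Coxeter

variable {cs}

theorem BrLe.eq_or_length_lt {u w : W} (h : BrLe cs u w) : u = w ∨ cs.length u < cs.length w := by
  induction h with
  | refl => exact Or.inl rfl
  | tail _ hstep ih =>
    obtain ⟨hlen, t, ht | rfl, rfl⟩ := hstep
    · rcases ih with rfl | hlt
      · exact Or.inr (lt_of_le_of_ne' hlen (ht.length_mul_right_ne _))
      · exact Or.inr (hlt.trans_le hlen)
    · rwa [one_mul]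

theorem BrLt.length_lt {u w : W} (h : BrLt cs u w) : cs.length u < cs.length w :=
  h.1.eq_or_length_lt.resolve_left h.2

theorem sd_or_sa_or_wa_or_wd {I : Set W} {J : Set B} (s : B) (z : W) :
    SD cs s z ∨ SA cs I s z ∨ WA cs I J s z ∨ WD cs J s z := by
  rcases cs.length_simple_mul z s with h | h
  · have hlt : cs.length z < cs.length (cs.simple s * z) := by omega
    by_cases hI : cs.simple s * z ∈ I
    · exact Or.inr (Or.inl ⟨hlt, hI⟩)
    by_cases hD : cs.simple s * z ∈ DD cs J
    · exact Or.inr (Or.inr (Or.inl ⟨hlt, hD, hI⟩))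
    · exact Or.inr (Or.inr (Or.inr ⟨hlt, hD⟩))
  · exact Or.inl (by unfold SD; omega)

theorem IsIdealWk.simple_mul_mem {I : Set W} (hI : IsIdealWk cs I) {s : B} {z : W} (hz : z ∈ I)
    (h : SD cs s z) : cs.simple s * z ∈ I := by
  refine hI _ z ?_ hz
  have := cs.length_simple_mul z s
  unfold WkLe
  rw [mul_inv_rev, mul_inv_cancel_left, cs.inv_simple, cs.length_simple]
  unfold SD at h
  omega

end Coxeter

namespace WGModule

open Module.Basis

variable {cs} {I : Set W} {J : Set B} (D : WGModule cs I J)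

def barₛₗ : D.V →ₛₗ[((invert : A ≃ₐ[ℤ] A) : A →+* A)] D.V where
  toFun := D.bar
  map_add' := D.bar_add
  map_smul' := D.bar_smul

@[simp]
theorem barₛₗ_apply (x : D.V) : D.barₛₗ x = D.bar x :=
  rfl

abbrev weightedDegreeLE (n : ℤ) : AddSubgroup D.V :=
  D.bas.weightedDegreeLE (fun z => cs.length (z : W)) n

abbrev spanLengthLT (n : ℤ) : Submodule A D.V :=
  D.bas.spanLengthLT (fun z => cs.length (z : W)) n

theorem T_bas_mem_spanLengthLT (s : B) (z : I) :
    D.T s (D.bas z) ∈ D.spanLengthLT (cs.length (z : W) + 2) := by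
  have hlen := cs.length_simple_mul (z : W) s
  rcases sd_or_sa_or_wa_or_wd (I := I) (J := J) s (z : W) with h | h | h | h
  · rw [D.act_SD s z h (D.ideal.simple_mul_mem z.2 h)]
    refine add_mem (self_mem_spanLengthLT ?_) (Submodule.smul_mem _ _ (self_mem_spanLengthLT ?_))
    · unfold SD at h; push_cast; omega
    · omega
  · rw [D.act_SA s z h]
    exact self_mem_spanLengthLT (by push_cast; omega)
  · rw [D.act_WA s z h]
    refine sub_mem (Submodule.smul_mem _ _ (self_mem_spanLengthLT (by omega)))
      (Submodule.finsuppSum_mem _ _ _ _ fun y hy =>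
        Submodule.smul_mem _ _ (self_mem_spanLengthLT ?_))
    have := (D.r_supp s z y hy).length_lt
    omega
  · rw [D.act_WD s z h]
    exact Submodule.smul_mem _ _ (self_mem_spanLengthLT (by omega))

theorem T_mem_spanLengthLT (s : B) {n : ℤ} {x : D.V} (hx : x ∈ D.spanLengthLT n) :
    D.T s x ∈ D.spanLengthLT (n + 1) := by
  refine (Submodule.map_span_le (D.T s) _ _).mpr ?_ (Submodule.mem_map_of_mem hx)
  rintro _ ⟨z, hz, rfl⟩
  have hz : (cs.length (z : W) : ℤ) < n := hz
  exact spanLengthLT_mono (by omega) (D.T_bas_mem_spanLengthLT s z)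

theorem T_bas_mem_weightedDegreeLE_of_not_wa {s : B} {z : I} (hWA : ¬ WA cs I J s z) :
    D.T s (D.bas z) ∈ D.weightedDegreeLE (cs.length (z : W) + 1) := by
  have hlen := cs.length_simple_mul (z : W) s
  rcases sd_or_sa_or_wa_or_wd (I := I) (J := J) s (z : W) with h | h | h | h
  · rw [D.act_SD s z h (D.ideal.simple_mul_mem z.2 h)]
    refine add_mem (weightedDegreeLE_mono ?_ (self_mem_weightedDegreeLE _)) ?_
    · unfold SD at h; dsimp only; omega
    · rw [add_comm]
      exact smul_mem_weightedDegreeLE degree_Q_sub_Qi_le (self_mem_weightedDegreeLE z)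
  · rw [D.act_SA s z h]
    exact weightedDegreeLE_mono (by dsimp only; omega) (self_mem_weightedDegreeLE _)
  · exact absurd h hWA
  · rw [D.act_WD s z h, neg_smul]
    exact neg_mem (weightedDegreeLE_mono (by omega)
      (smul_mem_weightedDegreeLE degree_Qi_le (self_mem_weightedDegreeLE z)))

def BarUnitriangular (w : I) : Prop :=
  D.bar (D.bas w) - D.bas w ∈ D.spanLengthLT (cs.length (w : W)) ∧
    D.bar (D.bas w) - D.bas w ∈ D.weightedDegreeLE (cs.length (w : W))

variable {D}

theorem BarUnitriangular.bar_bas_mem_spanLengthLT {w : I} (h : D.BarUnitriangular w) :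
    D.bar (D.bas w) ∈ D.spanLengthLT (cs.length (w : W) + 1) := by
  rw [← sub_add_cancel (D.bar (D.bas w)) (D.bas w)]
  exact add_mem (spanLengthLT_mono (by omega) h.1) (self_mem_spanLengthLT (by omega))

theorem BarUnitriangular.bar_bas_mem_weightedDegreeLE {w : I} (h : D.BarUnitriangular w) :
    D.bar (D.bas w) ∈ D.weightedDegreeLE (cs.length (w : W)) := by
  rw [← sub_add_cancel (D.bar (D.bas w)) (D.bas w)]
  exact add_mem h.2 (self_mem_weightedDegreeLE w)

theorem T_mem_weightedDegreeLE {s : B} {n : ℤ} {x : D.V}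
    (hT : ∀ z : I, (cs.length (z : W) : ℤ) < n →
      D.T s (D.bas z) ∈ D.weightedDegreeLE (cs.length (z : W) + 1))
    (hxL : x ∈ D.spanLengthLT n) (hxF : x ∈ D.weightedDegreeLE n) :
    D.T s x ∈ D.weightedDegreeLE (n + 1) :=
  map_mem_weightedDegreeLE (D.T s) hT hxL hxF

theorem barUnitriangular_of_lt (w : I)
    (hA : ∀ u : I, cs.length (u : W) < cs.length (w : W) → D.BarUnitriangular u)
    (hT : ∀ (s : B) (z : I), cs.length (z : W) < cs.length (w : W) →
      D.T s (D.bas z) ∈ D.weightedDegreeLE (cs.length (z : W) + 1)) :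
    D.BarUnitriangular w := by
  by_cases hw1 : (w : W) = 1
  · obtain rfl : w = ⟨1, D.one_mem⟩ := Subtype.ext hw1
    rw [BarUnitriangular, D.bar_one, sub_self]
    exact ⟨zero_mem _, zero_mem _⟩
  obtain ⟨s, hs⟩ := cs.exists_leftDescent_of_ne_one hw1
  have hlen := cs.length_simple_mul (w : W) s
  set u : I := ⟨cs.simple s * w, D.ideal.simple_mul_mem w.2 hs⟩
  have hsu : cs.simple s * (u : W) = w := cs.simple_mul_simple_cancel_left s
  have hlu : cs.length (u : W) + 1 = cs.length (w : W) := by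
    unfold CoxeterSystem.IsLeftDescent at hs; dsimp only [u]; omega
  have hSA : SA cs I s (u : W) := ⟨by rw [hsu]; omega, hsu ▸ w.2⟩
  have hbas : D.bas w = D.T s (D.bas u) := by
    rw [D.act_SA s u hSA]; congr 1; exact Subtype.ext hsu.symm
  have hu := hA u (by omega)
  have key : D.bar (D.bas w) - D.bas w
      = D.T s (D.bar (D.bas u) - D.bas u) - (Q - Qi) • D.bar (D.bas u) := by
    rw [hbas, D.bar_T, map_sub]; abel
  have hlw : (cs.length (w : W) : ℤ) = cs.length (u : W) + 1 := by omega
  rw [BarUnitriangular, key, hlw]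
  refine ⟨sub_mem (D.T_mem_spanLengthLT s hu.1)
      (Submodule.smul_mem _ _ hu.bar_bas_mem_spanLengthLT),
    sub_mem (T_mem_weightedDegreeLE (fun z hz => hT s z (by omega)) hu.1 hu.2) ?_⟩
  rw [add_comm]
  exact smul_mem_weightedDegreeLE degree_Q_sub_Qi_le hu.bar_bas_mem_weightedDegreeLE

theorem T_bas_mem_weightedDegreeLE_of_le (s : B) (w : I)
    (hA : ∀ y : I, cs.length (y : W) ≤ cs.length (w : W) → D.BarUnitriangular y)
    (hT : ∀ (s : B) (z : I), cs.length (z : W) < cs.length (w : W) →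
      D.T s (D.bas z) ∈ D.weightedDegreeLE (cs.length (z : W) + 1)) :
    D.T s (D.bas w) ∈ D.weightedDegreeLE (cs.length (w : W) + 1) := by
  by_cases hWA : WA cs I J s w
  swap
  · exact D.T_bas_mem_weightedDegreeLE_of_not_wa hWA
  have hw := hA w le_rfl
  set β := D.bar (D.bas w)
  set ρ := (D.r s w).sum fun y p => (toLaurent p) • D.bas y
  have hact : D.T s (D.bas w) = Q • D.bas w - ρ := D.act_WA s w hWA
  have hbarT : D.barₛₗ (D.T s (D.bas w)) = D.T s β - (Q - Qi) • β := D.bar_T s (D.bas w)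
  have hbarρ : D.barₛₗ (D.T s (D.bas w)) = Qi • β - D.barₛₗ ρ := by
    rw [hact, map_sub, map_smulₛₗ, RingHom.coe_coe, invert_Q, barₛₗ_apply]
  -- Under `bar`, the coefficients `r^s_{y,w}` of the weak-ascent formula (zero constant term)
  -- become coefficients of degree `≤ -1` of the `bar (bas y)`, `ℓ y ≤ ℓ w`.
  have key : D.T s (D.bas w) = Q • β - D.barₛₗ ρ - D.T s (β - D.bas w) := by
    rw [map_sub]
    linear_combination (norm := module) hbarρ - hbarT
  rw [key]
  refine sub_mem (sub_mem ?_ ?_) (T_mem_weightedDegreeLE (fun z hz => hT s z (by omega)) hw.1 hw.2)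
  · rw [add_comm]
    exact smul_mem_weightedDegreeLE degree_Q_le hw.bar_bas_mem_weightedDegreeLE
  · rw [map_finsuppSum, Finsupp.sum]
    refine sum_mem fun y hy => ?_
    have hy := (D.r_supp s w y (Finsupp.mem_support_iff.mp hy)).length_lt
    have hlen := cs.length_simple_mul (w : W) s
    rw [map_smulₛₗ]
    exact weightedDegreeLE_mono (by omega)
      (smul_mem_weightedDegreeLE (degree_invert_toLaurent_le (D.r_const s w y))
        (hA y (by omega)).bar_bas_mem_weightedDegreeLE)

theorem barUnitriangular_and_T_bas_mem (n : ℕ) :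
    ∀ w : I, cs.length (w : W) < n → D.BarUnitriangular w ∧
      ∀ s, D.T s (D.bas w) ∈ D.weightedDegreeLE (cs.length (w : W) + 1) := by
  induction n with
  | zero => intro w hw; omega
  | succ n ih =>
    have hA : ∀ w : I, cs.length (w : W) ≤ n → D.BarUnitriangular w := fun w hw =>
      barUnitriangular_of_lt w (fun u hu => (ih u (by omega)).1)
        (fun s z hz => (ih z (by omega)).2 s)
    exact fun w hw => ⟨hA w (by omega), fun s => T_bas_mem_weightedDegreeLE_of_le s w
      (fun y hy => hA y (by omega)) (fun s z hz => (ih z (by omega)).2 s)⟩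

theorem barUnitriangular (w : I) : D.BarUnitriangular w :=
  (barUnitriangular_and_T_bas_mem _ w (Nat.lt_succ_self _)).1

end WGModule

section TransitionToBarInvariant

open Module.Basis

variable {ι V : Type*} [AddCommGroup V] [Module A V] {b : Module.Basis ι A V} {ℓ : ι → ℕ}
  {c : ι → V} {qp : ι → ι →₀ ℤ[X]}

def transitionCoeffs (qp : ι → ι →₀ ℤ[X]) (w : ι) : ι →₀ A :=
  (qp w).mapRange (fun p => Q * toLaurent p) (by simp)

theorem linearCombination_transitionCoeffs
    (htrans : ∀ w, b w = c w + (qp w).sum fun y p => (Q * toLaurent p) • c y) (w : ι) :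
    Finsupp.linearCombination A c (transitionCoeffs qp w) = b w - c w := by
  rw [transitionCoeffs, Finsupp.linearCombination_apply,
    Finsupp.sum_mapRange_index (by simp), htrans w, add_sub_cancel_left]

theorem top_le_span_of_transition
    (htrans : ∀ w, b w = c w + (qp w).sum fun y p => (Q * toLaurent p) • c y) :
    ⊤ ≤ Submodule.span A (Set.range c) := by
  rw [← b.span_eq, Submodule.span_le]
  rintro _ ⟨w, rfl⟩
  rw [htrans w]
  exact add_mem (Submodule.subset_span ⟨w, rfl⟩) (Submodule.finsuppSum_mem _ _ _ _ fun y _ =>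
    Submodule.smul_mem _ _ (Submodule.subset_span ⟨y, rfl⟩))

theorem linearIndependent_of_transition
    (htrans : ∀ w, b w = c w + (qp w).sum fun y p => (Q * toLaurent p) • c y)
    (hlen : ∀ w y, qp w y ≠ 0 → ℓ y < ℓ w) : LinearIndependent A c := by
  -- `P w` are the `c`-coordinates of `b w`. They are unitriangular, so they span; and
  -- `linearCombination c ∘ linearCombination P = linearCombination b` is injective.
  set P : ι → ι →₀ A := fun w => Finsupp.single w 1 + transitionCoeffs qp w
  have hP : ∀ w, Finsupp.linearCombination A c (P w) = b w := fun w => by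
    rw [map_add, linearCombination_transitionCoeffs htrans, Finsupp.linearCombination_single,
      one_smul, add_sub_cancel]
  have hsingle : ∀ y, Finsupp.single y 1 ∈ Submodule.span A (Set.range P) := by
    intro y
    induction y using (measure ℓ).wf.induction with
    | _ y ih =>
    rw [← add_sub_cancel_right (Finsupp.single y 1) (transitionCoeffs qp y)]
    refine sub_mem (Submodule.subset_span ⟨y, rfl⟩) ?_
    have hsupp : transitionCoeffs qp y ∈ Finsupp.supported A A {z | ℓ z < ℓ y} :=
      (Finsupp.mem_supported _ _).mpr fun z hz =>
        hlen y z (Finsupp.mem_support_iff.mp (Finsupp.support_mapRange hz))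
    rw [Finsupp.supported_eq_span_single, Submodule.mem_span] at hsupp
    exact hsupp _ (Set.image_subset_iff.mpr fun z hz => ih z hz)
  have hsurj : Function.Surjective (Finsupp.linearCombination A P) := by
    rw [← LinearMap.range_eq_top, Finsupp.range_linearCombination, eq_top_iff,
      ← Finsupp.basisSingleOne.span_eq, Submodule.span_le]
    rintro _ ⟨y, rfl⟩
    simpa using hsingle y
  have hcomp : Finsupp.linearCombination A c ∘ Finsupp.linearCombination A P
      = Finsupp.linearCombination A b := by
    funext f
    simp only [Function.comp_apply, Finsupp.linearCombination_linearCombination, hP]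
  exact Function.Injective.of_comp_right (hcomp ▸ b.linearIndependent) hsurj

def basisOfTransition
    (htrans : ∀ w, b w = c w + (qp w).sum fun y p => (Q * toLaurent p) • c y)
    (hlen : ∀ w y, qp w y ≠ 0 → ℓ y < ℓ w) : Module.Basis ι A V :=
  .mk (linearIndependent_of_transition htrans hlen) (top_le_span_of_transition htrans)

theorem coe_basisOfTransition
    (htrans : ∀ w, b w = c w + (qp w).sum fun y p => (Q * toLaurent p) • c y)
    (hlen : ∀ w y, qp w y ≠ 0 → ℓ y < ℓ w) : ⇑(basisOfTransition htrans hlen) = c :=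
  Module.Basis.coe_mk _ _

theorem basisOfTransition_repr_sub
    (htrans : ∀ w, b w = c w + (qp w).sum fun y p => (Q * toLaurent p) • c y)
    (hlen : ∀ w y, qp w y ≠ 0 → ℓ y < ℓ w) (w : ι) :
    (basisOfTransition htrans hlen).repr (b w - c w) = transitionCoeffs qp w := by
  have := (basisOfTransition htrans hlen).repr_linearCombination (transitionCoeffs qp w)
  rwa [coe_basisOfTransition, linearCombination_transitionCoeffs htrans] at this

theorem bar_linearCombination {bar : V →ₛₗ[((invert : A ≃ₐ[ℤ] A) : A →+* A)] V}
    (hc : ∀ w, bar (c w) = c w) (f : ι →₀ A) :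
    bar (Finsupp.linearCombination A c f)
      = Finsupp.linearCombination A c (f.mapRange invert (map_zero _)) := by
  simp only [Finsupp.linearCombination_apply, map_finsuppSum, map_smulₛₗ, hc]
  rw [Finsupp.sum_mapRange_index (by simp)]
  rfl

theorem sub_mem_weightedDegreeLE {bar : V →ₛₗ[((invert : A ≃ₐ[ℤ] A) : A →+* A)] V}
    (hc : ∀ w, bar (c w) = c w)
    (hbar : ∀ w, bar (b w) - b w ∈ b.spanLengthLT ℓ (ℓ w) ∧
      bar (b w) - b w ∈ b.weightedDegreeLE ℓ (ℓ w))
    (htrans : ∀ w, b w = c w + (qp w).sum fun y p => (Q * toLaurent p) • c y)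
    (hlen : ∀ w y, qp w y ≠ 0 → ℓ y < ℓ w) (w : ι) :
    b w - c w ∈ (basisOfTransition htrans hlen).weightedDegreeLE ℓ (ℓ w) := by
  set cb := basisOfTransition htrans hlen
  induction w using (measure ℓ).wf.induction with
  | _ w ih =>
  have hb : ∀ z, ℓ z < ℓ w → b z ∈ cb.weightedDegreeLE ℓ (ℓ z + 0) := fun z hz => by
    rw [add_zero, ← sub_add_cancel (b z) (c z)]
    refine add_mem (ih z hz) ?_
    simpa [cb, coe_basisOfTransition] using cb.self_mem_weightedDegreeLE (ℓ := ℓ) z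
  have hdefect : bar (b w) - b w ∈ cb.weightedDegreeLE ℓ (ℓ w) := by
    simpa using map_mem_weightedDegreeLE (k := 0) LinearMap.id
      (fun z hz => hb z (by exact_mod_cast hz)) (hbar w).1 (hbar w).2
  -- `b w - c w` has coefficients in `qℤ[q]`, so `bar (b w - c w)` has them in `q⁻¹ℤ[q⁻¹]`.
  have hbar_sub : bar (b w - c w) ∈ cb.weightedDegreeLE ℓ (ℓ w) := by
    rw [← linearCombination_transitionCoeffs htrans, bar_linearCombination hc,
      ← coe_basisOfTransition htrans hlen, linearCombination_mem_weightedDegreeLE_iff]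
    intro y
    rw [Finsupp.mapRange_apply, transitionCoeffs, Finsupp.mapRange_apply]
    by_cases hy : qp w y = 0
    · simp [hy]
    rw [Q_mul_toLaurent]
    refine (degree_invert_toLaurent_le (by simp)).trans (WithBot.coe_le_coe.mpr ?_)
    have := hlen w y hy
    omega
  have key : b w - c w = bar (b w - c w) - (bar (b w) - b w) := by
    rw [map_sub, hc]; abel
  rw [key]
  exact sub_mem hbar_sub hdefect

theorem degree_le_of_barInvariant {bar : V →ₛₗ[((invert : A ≃ₐ[ℤ] A) : A →+* A)] V}
    (hc : ∀ w, bar (c w) = c w)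
    (hbar : ∀ w, bar (b w) - b w ∈ b.spanLengthLT ℓ (ℓ w) ∧
      bar (b w) - b w ∈ b.weightedDegreeLE ℓ (ℓ w))
    (htrans : ∀ w, b w = c w + (qp w).sum fun y p => (Q * toLaurent p) • c y)
    (hlen : ∀ w y, qp w y ≠ 0 → ℓ y < ℓ w) {y w : ι} (hyw : ℓ y < ℓ w) :
    (qp w y).degree ≤ ((ℓ w - ℓ y - 1 : ℕ) : WithBot ℕ) := by
  have h := sub_mem_weightedDegreeLE hc hbar htrans hlen w y
  rw [basisOfTransition_repr_sub, transitionCoeffs, Finsupp.mapRange_apply, Q_mul_toLaurent,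
    show (ℓ w : ℤ) - ℓ y = ((ℓ w - ℓ y - 1 + 1 : ℕ) : ℤ) by omega,
    degree_toLaurent_le_iff] at h
  exact degree_le_of_degree_X_mul_le h

end TransitionToBarInvariant

/-- the degree bound for the polynomials `q_{y,w}`. -/
theorem stmt10 (I : Set W) (J : Set B) (D : WGModule cs I J)
    (c : I → D.V) (qp : I → I →₀ Polynomial ℤ)
    (hcbar : ∀ w : I, D.bar (c w) = c w)
    (hsupp : ∀ w y : I, qp w y ≠ 0 → BrLt cs (y : W) (w : W))
    (htrans : ∀ w : I,
      D.bas w = c w + (qp w).sum fun y p => (Q * Polynomial.toLaurent p) • c y)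
    (y w : I) (hyw : BrLt cs (y : W) (w : W)) :
    (qp w y).degree ≤ ((cs.length (w : W) - cs.length (y : W) - 1 : ℕ) : WithBot ℕ) :=
  degree_le_of_barInvariant (bar := D.barₛₗ) hcbar D.barUnitriangular htrans
    (fun w y h => (hsupp w y h).length_lt) hyw.length_lt

end WGI
end
end
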